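/- Let λ(p) = p^{n+1} + v_n p^{n-1} + ⋯ + v₁ + u/(p-w) with u ≠ 0, simple distinct critical points r₁,…,r_{n+2} avoiding w and with λ(r_k) ≠ λ(r_i) for k ≠ i. Then u²·Σ_{k≠i} (λ(r_k)-λ(r_i))/(λ''(r_k)(r_k-r_i)²(r_k-w)⁴) + (terms at z=r_i and z=w) = 0, where the full statement is: the sum over all poles of the residues of h₃(z) = (λ(z)-λ(r_i))/(λ'(z)(z-r_i)²(z-w)⁴) is zero (since h₃(z) = O(z^{-2}) as z → ∞). -/

import Mathlib

open Finset

/-- `λ(p) = p^{n+1} + v_n p^{n-1} + ⋯ + v₂ p + v₁ + u/(p-w)`. -/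
noncomputable def lam (n : ℕ) (v : ℕ → ℂ) (u w : ℂ) : ℂ → ℂ :=
  fun p => p ^ (n + 1) + (∑ i ∈ Finset.range n, v (i + 1) * p ^ i) + u / (p - w)

/-- Residue of `f` at a pole `A` of order at most `N ≥ 1`:
`(1/(N-1)!) lim_{z→A} d^{N-1}/dz^{N-1} [(z-A)^N f(z)]`. -/
noncomputable def residueOrd (N : ℕ) (f : ℂ → ℂ) (A : ℂ) : ℂ :=
  Filter.limUnder (nhdsWithin A {A}ᶜ)
    (fun z => ((Nat.factorial (N - 1) : ℂ))⁻¹ *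
      iteratedDeriv (N - 1) (fun t => (t - A) ^ N * f t) z)

/-!
Writing `λ = P + u/(z - w)` with `P` a monic polynomial of degree `n + 1`, one has
`λ' = Q/(z - w)²` with `Q = P'·(z - w)² - u` of degree `n + 2` and leading coefficient `n + 1`;
its roots are the `n + 2` critical points, so `Q = (n + 1) ∏ₖ (z - r k)`. Likewise
`λ - λ(r i) = A/(z - w)` with `A` of degree `n + 2` vanishing to second order at the critical
point `r i`, so `A = (z - r i)² B`. Hence `h₃ = B / ((n + 1) ∏ₖ (z - r k) · (z - w)³)` with
`deg B ≤ n`: the denominator exceeds the numerator in degree by at least two.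

For such a rational function the residues add up to zero. A partial fraction decomposition
`B = G·(z - w)³ + S·∏ₖ (z - r k)` with `deg S < 3` makes the residue at `r k` the Lagrange
weight `G(r k) / ∏_{j ≠ k} (r k - r j)`, and these sum to the top coefficient of `G`; the
residue at `w` is the top coefficient of `S`. Comparing the coefficients of `z^(n+4)` in the
decomposition shows that the two cancel.
-/

open Polynomial Filter Topology

namespace Polynomial

theorem degree_sum_C_mul_X_pow_lt {R : Type*} [Semiring R] (a : ℕ → R) (n : ℕ) :
    (∑ i ∈ range n, C (a i) * X ^ i).degree < (n : WithBot ℕ) := by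
  refine (degree_lt_iff_coeff_zero _ _).mpr fun m hm => ?_
  rw [finsetSum_coeff]
  refine sum_eq_zero fun i hi => ?_
  rw [coeff_C_mul_X_pow, if_neg (by simp at hi; omega)]

theorem sq_X_sub_C_dvd_of_isRoot_derivative {R : Type*} [CommRing R] {p : R[X]} {t : R}
    (h : p.IsRoot t) (h' : (derivative p).IsRoot t) : (X - C t) ^ 2 ∣ p := by
  rcases eq_or_ne p 0 with rfl | hp
  · exact dvd_zero _
  · exact (le_rootMultiplicity_iff hp).mp ((one_lt_rootMultiplicity_iff_isRoot hp).mpr ⟨h, h'⟩)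

section PartialFractions

variable {R : Type*} [CommRing R] {B G S P Q : R[X]}

theorem exists_eq_mul_add_mul_of_isCoprime [Nontrivial R] (B : R[X]) (hP : P.Monic)
    (hp : 0 < P.natDegree) (hPQ : IsCoprime P Q) :
    ∃ G S : R[X], S.natDegree < P.natDegree ∧ B = G * P + S * Q := by
  obtain ⟨a, b, hab⟩ := hPQ
  refine ⟨B * a + (B * b /ₘ P) * Q, B * b %ₘ P, ?_, ?_⟩
  · rcases eq_or_ne (B * b %ₘ P) 0 with h | h
    · rwa [h, natDegree_zero]
    · exact natDegree_lt_natDegree h (degree_modByMonic_lt _ hP)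
  · linear_combination (-B) * hab + (-Q) * modByMonic_add_div (B * b) P

theorem natDegree_lt_of_eq_mul_add_mul (hP : P.Monic) (hq : 0 < Q.natDegree)
    (hS : S.natDegree < P.natDegree) (hB : B.natDegree + 2 ≤ P.natDegree + Q.natDegree)
    (h : B = G * P + S * Q) : G.natDegree < Q.natDegree := by
  rcases eq_or_ne G 0 with rfl | hG
  · rwa [natDegree_zero]
  have hGP : (G * P).natDegree = G.natDegree + P.natDegree := by
    rw [mul_comm, hP.natDegree_mul' hG, add_comm]
  have hSQ : (S * Q).natDegree < P.natDegree + Q.natDegree :=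
    natDegree_mul_le.trans_lt (by omega)
  have : (G * P).natDegree < P.natDegree + Q.natDegree := by
    rw [eq_sub_of_add_eq h.symm]
    exact (natDegree_sub_le _ _).trans_lt (max_lt (by omega) hSQ)
  omega

theorem coeff_add_coeff_eq_zero_of_eq_mul_add_mul (hP : P.Monic) (hQ : Q.Monic)
    (hq : 0 < Q.natDegree) (hS : S.natDegree < P.natDegree)
    (hB : B.natDegree + 2 ≤ P.natDegree + Q.natDegree) (h : B = G * P + S * Q) :
    G.coeff (Q.natDegree - 1) + S.coeff (P.natDegree - 1) = 0 := by
  have hG := natDegree_lt_of_eq_mul_add_mul hP hq hS hB h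
  have hcoeff := congrArg (coeff · (P.natDegree + Q.natDegree - 1)) h
  simp only [coeff_add] at hcoeff
  rw [coeff_eq_zero_of_natDegree_lt (by omega),
    show P.natDegree + Q.natDegree - 1 = (Q.natDegree - 1) + P.natDegree by omega,
    coeff_mul_add_eq_of_natDegree_le (by omega) le_rfl,
    show Q.natDegree - 1 + P.natDegree = (P.natDegree - 1) + Q.natDegree by omega,
    coeff_mul_add_eq_of_natDegree_le (by omega) le_rfl, hP.coeff_natDegree,
    hQ.coeff_natDegree] at hcoeff
  linear_combination -hcoeff

end PartialFractions

end Polynomial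

theorem Lagrange.eq_C_mul_nodal {F ι : Type*} [Field F] {s : Finset ι} {v : ι → F}
    (hvs : Set.InjOn v s) {p : F[X]} (hp : p.natDegree ≤ #s)
    (hroot : ∀ i ∈ s, p.eval (v i) = 0) : p = C (p.coeff #s) * nodal s v := by
  refine eq_of_degree_sub_lt_of_eval_index_eq _ hvs ?_ fun i hi => by
    rw [hroot i hi, eval_mul, eval_nodal_at_node hi, mul_zero]
  rw [degree_lt_iff_coeff_zero]
  intro j hj
  rw [coeff_sub, coeff_C_mul]
  rcases hj.eq_or_lt with rfl | hj
  · rw [← natDegree_nodal (v := v), nodal_monic.coeff_natDegree, natDegree_nodal, mul_one,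
      sub_self]
  · rw [coeff_eq_zero_of_natDegree_lt (hp.trans_lt hj),
      coeff_eq_zero_of_natDegree_lt (natDegree_nodal.trans_lt hj), mul_zero, sub_zero]

theorem Lagrange.isCoprime_X_sub_C_pow_nodal {F ι : Type*} [Field F] {s : Finset ι} {v : ι → F}
    {w : F} (hw : ∀ i ∈ s, v i ≠ w) (m : ℕ) : IsCoprime ((X - C w) ^ m) (nodal s v) :=
  IsCoprime.prod_right fun i hi =>
    (isCoprime_X_sub_C_of_isUnit_sub (sub_ne_zero.mpr (hw i hi).symm).isUnit).pow_left

section Analytic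

variable {𝕜 : Type*} [NontriviallyNormedField 𝕜]

@[fun_prop]
theorem Polynomial.analyticAt_eval [CompleteSpace 𝕜] (p : 𝕜[X]) (z : 𝕜) :
    AnalyticAt 𝕜 (fun x => p.eval x) z :=
  AnalyticOnNhd.eval_polynomial p z (Set.mem_univ z)

theorem Polynomial.iteratedDeriv_eval (p : 𝕜[X]) (k : ℕ) :
    iteratedDeriv k (fun z => p.eval z) = fun z => (derivative^[k] p).eval z := by
  induction k with
  | zero => rfl
  | succ k ih =>
    rw [iteratedDeriv_succ, ih]
    ext z
    rw [Function.iterate_succ_apply', Polynomial.deriv]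

theorem Polynomial.iteratedDeriv_eval_of_natDegree_le {p : 𝕜[X]} {k : ℕ} (hp : p.natDegree ≤ k)
    (x : 𝕜) : iteratedDeriv k (fun z => p.eval z) x = k.factorial * p.coeff k := by
  have hconst : (derivative^[k] p).natDegree ≤ 0 :=
    (natDegree_iterate_derivative p k).trans (by omega)
  rw [iteratedDeriv_eval]
  dsimp only
  rw [eq_C_of_natDegree_le_zero hconst, eval_C, coeff_iterate_derivative, zero_add,
    Nat.descFactorial_self, nsmul_eq_mul]

theorem iteratedDeriv_sub_pow_mul_eq_zero [CharZero 𝕜] [CompleteSpace 𝕜] {m k : ℕ} {h : 𝕜 → 𝕜}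
    {A : 𝕜} (hh : AnalyticAt 𝕜 h A) (hk : k < m) :
    iteratedDeriv k (fun z => (z - A) ^ m * h z) A = 0 := by
  have ha : AnalyticAt 𝕜 (fun z => (z - A) ^ m * h z) A := by fun_prop
  refine (natCast_le_analyticOrderAt_iff_iteratedDeriv_eq_zero ha).mp ?_ k hk
  exact (natCast_le_analyticOrderAt ha).mpr ⟨h, hh, .of_forall fun z => rfl⟩

theorem eventually_nhdsNE_ne {X : Type*} [TopologicalSpace X] [T1Space X] (x y : X) :
    ∀ᶠ z in 𝓝[≠] x, z ≠ y := by
  rcases eq_or_ne x y with rfl | hxy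
  · exact self_mem_nhdsWithin
  · exact (eventually_ne_nhds hxy).filter_mono nhdsWithin_le_nhds

end Analytic

theorem residueOrd_eq_iteratedDeriv {N : ℕ} {f g : ℂ → ℂ} {A : ℂ} (hg : AnalyticAt ℂ g A)
    (hfg : ∀ᶠ z in 𝓝[≠] A, (z - A) ^ N * f z = g z) :
    residueOrd N f A = ((N - 1).factorial : ℂ)⁻¹ * iteratedDeriv (N - 1) g A := by
  have hderiv : ∀ᶠ z in 𝓝[≠] A,
      iteratedDeriv (N - 1) (fun t => (t - A) ^ N * f t) z = iteratedDeriv (N - 1) g z := by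
    filter_upwards [eventually_eventually_nhdsWithin.mpr hfg, self_mem_nhdsWithin] with z hz hzA
    rw [isOpen_compl_singleton.nhdsWithin_eq hzA] at hz
    exact Filter.EventuallyEq.iteratedDeriv_eq _ hz
  have hcont : ContinuousAt (iteratedDeriv (N - 1) g) A := by
    rw [iteratedDeriv_eq_iterate]
    exact (hg.iterated_deriv _).continuousAt
  refine ((hcont.tendsto.mono_left nhdsWithin_le_nhds).const_mul _).congr' ?_ |>.limUnder_eq
  exact hderiv.mono fun z hz => by simp only [hz]

theorem residueOrd_add_div_sub_pow {N : ℕ} (hN : 0 < N) {f h : ℂ → ℂ} {S : ℂ[X]} {A : ℂ}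
    (hh : AnalyticAt ℂ h A) (hS : S.natDegree < N)
    (hf : ∀ᶠ z in 𝓝[≠] A, f z = h z + S.eval z / (z - A) ^ N) :
    residueOrd N f A = S.coeff (N - 1) := by
  have hfg : ∀ᶠ z in 𝓝[≠] A, (z - A) ^ N * f z = (z - A) ^ N * h z + S.eval z := by
    filter_upwards [hf, self_mem_nhdsWithin] with z hz hzA
    have : (z - A) ^ N ≠ 0 := pow_ne_zero _ (sub_ne_zero.mpr hzA)
    rw [hz]
    field_simp
  have hpow : AnalyticAt ℂ (fun z => (z - A) ^ N * h z) A := by fun_prop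
  rw [residueOrd_eq_iteratedDeriv (by fun_prop) hfg,
    iteratedDeriv_fun_add hpow.contDiffAt (S.analyticAt_eval A).contDiffAt,
    iteratedDeriv_sub_pow_mul_eq_zero hh (Nat.sub_lt hN one_pos),
    S.iteratedDeriv_eval_of_natDegree_le (by omega), zero_add, ← mul_assoc,
    inv_mul_cancel₀ (Nat.cast_ne_zero.mpr (Nat.factorial_ne_zero _)), one_mul]

theorem residueOrd_one_div_nodal_add {ι : Type*} [DecidableEq ι] {s : Finset ι} {r : ι → ℂ}
    (hr : Set.InjOn r s) {k : ι} (hk : k ∈ s) {f h : ℂ → ℂ} {G : ℂ[X]}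
    (hh : AnalyticAt ℂ h (r k))
    (hf : ∀ᶠ z in 𝓝[≠] r k, f z = G.eval z / (Lagrange.nodal s r).eval z + h z) :
    residueOrd 1 f (r k) = G.eval (r k) / ∏ j ∈ s.erase k, (r k - r j) := by
  have hne : (Lagrange.nodal (s.erase k) r).eval (r k) ≠ 0 :=
    Lagrange.eval_nodal_not_at_node fun j hj h =>
      (mem_erase.mp hj).1 (hr (mem_erase.mp hj).2 hk h.symm)
  have hfg : ∀ᶠ z in 𝓝[≠] r k, (z - r k) ^ 1 * f z =
      G.eval z / (Lagrange.nodal (s.erase k) r).eval z + (z - r k) * h z := by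
    filter_upwards [hf, self_mem_nhdsWithin] with z hz hzk
    have : z - r k ≠ 0 := sub_ne_zero.mpr hzk
    rw [hz, Lagrange.nodal_eq_mul_nodal_erase hk, eval_mul, eval_sub, eval_X, eval_C]
    field_simp
  rw [residueOrd_eq_iteratedDeriv (by fun_prop (disch := exact hne)) hfg]
  simp [Lagrange.eval_nodal]

theorem sum_residueOrd_div_nodal_mul_pow_eq_zero {ι : Type*} [Fintype ι] [Nonempty ι]
    {r : ι → ℂ} (hr : Function.Injective r) {w : ℂ} (hw : ∀ k, r k ≠ w) {m : ℕ} (hm : 0 < m)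
    {B : ℂ[X]} (hB : B.natDegree + 2 ≤ m + Fintype.card ι) {f : ℂ → ℂ}
    (hf : ∀ z, (∀ k, z ≠ r k) → z ≠ w →
      f z = B.eval z / ((Lagrange.nodal univ r).eval z * (z - w) ^ m)) :
    ∑ k, residueOrd 1 f (r k) + residueOrd m f w = 0 := by
  classical
  set Q := Lagrange.nodal univ r
  have hq : Q.natDegree = Fintype.card ι := Lagrange.natDegree_nodal
  have hq0 : 0 < Q.natDegree := hq ▸ Fintype.card_pos
  have hP : ((X - C w) ^ m).Monic := (monic_X_sub_C w).pow m
  have hp : ((X - C w) ^ m).natDegree = m := by simp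
  obtain ⟨G, S, hS, hBGS⟩ := exists_eq_mul_add_mul_of_isCoprime (Q := Q) B hP (by omega)
    (Lagrange.isCoprime_X_sub_C_pow_nodal (fun k _ => hw k) m)
  have hQz : ∀ z, (∀ k, z ≠ r k) → Q.eval z ≠ 0 := fun z hz =>
    Lagrange.eval_nodal_not_at_node fun k _ => hz k
  have hfGS : ∀ x, ∀ᶠ z in 𝓝[≠] x, f z = G.eval z / Q.eval z + S.eval z / (z - w) ^ m := by
    intro x
    filter_upwards [eventually_all.mpr fun k => eventually_nhdsNE_ne x (r k),
      eventually_nhdsNE_ne x w] with z hzr hzw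
    have := hQz z hzr
    have : (z - w) ^ m ≠ 0 := pow_ne_zero _ (sub_ne_zero.mpr hzw)
    rw [hf z hzr hzw, hBGS]
    simp only [eval_add, eval_mul, eval_pow, eval_sub, eval_X, eval_C]
    field_simp
  have hres_r : ∀ k, residueOrd 1 f (r k) = G.eval (r k) / ∏ j ∈ univ.erase k, (r k - r j) :=
    fun k => residueOrd_one_div_nodal_add hr.injOn (mem_univ k)
      (by fun_prop (disch := exact pow_ne_zero _ (sub_ne_zero.mpr (hw k)))) (hfGS (r k))
  have hres_w : residueOrd m f w = S.coeff (m - 1) :=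
    residueOrd_add_div_sub_pow hm (by fun_prop (disch := exact hQz w fun k => (hw k).symm))
      (hp ▸ hS) (hfGS w)
  have hG : G.degree < (univ : Finset ι).card := by
    rw [card_univ, ← hq]
    exact degree_le_natDegree.trans_lt
      (WithBot.coe_lt_coe.mpr (natDegree_lt_of_eq_mul_add_mul hP hq0 hS (by omega) hBGS))
  rw [sum_congr rfl fun k _ => hres_r k, hres_w, ← Lagrange.coeff_eq_sum hr.injOn hG,
    card_univ, ← hq, ← hp]
  exact coeff_add_coeff_eq_zero_of_eq_mul_add_mul hP Lagrange.nodal_monic hq0 hS (by omega) hBGS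

noncomputable def lamPoly (n : ℕ) (v : ℕ → ℂ) : ℂ[X] :=
  X ^ (n + 1) + ∑ i ∈ range n, C (v (i + 1)) * X ^ i

noncomputable def lamCritPoly (n : ℕ) (v : ℕ → ℂ) (u w : ℂ) : ℂ[X] :=
  derivative (lamPoly n v) * (X - C w) ^ 2 - C u

noncomputable def lamNumer (n : ℕ) (v : ℕ → ℂ) (u w c : ℂ) : ℂ[X] :=
  (lamPoly n v - C c) * (X - C w) + C u

section Lam

variable {n : ℕ} {v : ℕ → ℂ} {u w : ℂ}

theorem degree_sum_lt_degree_X_pow :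
    (∑ i ∈ range n, C (v (i + 1)) * X ^ i).degree < (X ^ (n + 1) : ℂ[X]).degree := by
  rw [degree_X_pow]
  exact (degree_sum_C_mul_X_pow_lt _ n).trans (WithBot.coe_lt_coe.mpr n.lt_succ_self)

theorem lamPoly_monic : (lamPoly n v).Monic :=
  (monic_X_pow _).add_of_left degree_sum_lt_degree_X_pow

theorem natDegree_lamPoly : (lamPoly n v).natDegree = n + 1 := by
  rw [lamPoly, natDegree_add_eq_left_of_degree_lt degree_sum_lt_degree_X_pow, natDegree_X_pow]

theorem lam_eq (z : ℂ) : lam n v u w z = (lamPoly n v).eval z + u / (z - w) := by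
  simp [lam, lamPoly, eval_finsetSum]

theorem lam_sub_eq (c : ℂ) {z : ℂ} (hz : z ≠ w) :
    lam n v u w z - c = (lamNumer n v u w c).eval z / (z - w) := by
  have : z - w ≠ 0 := sub_ne_zero.mpr hz
  rw [lam_eq, lamNumer]
  simp only [eval_add, eval_mul, eval_sub, eval_C, eval_X]
  field_simp
  ring

theorem deriv_lam {z : ℂ} (hz : z ≠ w) :
    deriv (lam n v u w) z = (lamCritPoly n v u w).eval z / (z - w) ^ 2 := by
  have : z - w ≠ 0 := sub_ne_zero.mpr hz
  have hlam : lam n v u w = fun p => (lamPoly n v).eval p + u * (p - w)⁻¹ := by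
    funext p; rw [lam_eq, div_eq_mul_inv]
  rw [hlam, ((Polynomial.hasDerivAt _ z).fun_add
    ((((hasDerivAt_id' z).sub_const w).fun_inv this).const_mul u)).deriv, lamCritPoly]
  simp only [eval_sub, eval_mul, eval_pow, eval_X, eval_C]
  field_simp
  ring

theorem natDegree_derivative_lamPoly : (derivative (lamPoly n v)).natDegree ≤ n :=
  (natDegree_derivative_le _).trans (by rw [natDegree_lamPoly]; omega)

theorem natDegree_lamCritPoly : (lamCritPoly n v u w).natDegree ≤ n + 2 :=
  (natDegree_sub_le_of_le (natDegree_mul_le_of_le natDegree_derivative_lamPoly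
    (natDegree_pow_le_of_le 2 (natDegree_X_sub_C_le w))) (natDegree_C u).le).trans (by simp)

theorem coeff_lamCritPoly : (lamCritPoly n v u w).coeff (n + 2) = n + 1 := by
  have hsq : ((X - C w) ^ 2).coeff 2 = 1 := by
    simpa using ((monic_X_sub_C w).pow 2).coeff_natDegree
  rw [lamCritPoly, coeff_sub, coeff_C, if_neg (by omega), sub_zero,
    coeff_mul_add_eq_of_natDegree_le natDegree_derivative_lamPoly
      (natDegree_pow_le_of_le 2 (natDegree_X_sub_C_le w)), coeff_derivative,
    ← natDegree_lamPoly (v := v), lamPoly_monic.coeff_natDegree, mul_one, hsq, one_mul,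
    mul_one]

theorem eval_lamCritPoly_eq_zero {t : ℂ} (ht : t ≠ w) (hcrit : deriv (lam n v u w) t = 0) :
    (lamCritPoly n v u w).eval t = 0 := by
  rwa [deriv_lam ht, div_eq_zero_iff, or_iff_left (pow_ne_zero _ (sub_ne_zero.mpr ht))] at hcrit

theorem lamCritPoly_eq_C_mul_nodal {r : Fin (n + 2) → ℂ} (hr : Function.Injective r)
    (hw : ∀ k, r k ≠ w) (hcrit : ∀ k, deriv (lam n v u w) (r k) = 0) :
    lamCritPoly n v u w = C ((n : ℂ) + 1) * Lagrange.nodal univ r := by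
  have := Lagrange.eq_C_mul_nodal (s := univ) hr.injOn (by simpa using natDegree_lamCritPoly)
    fun k _ => eval_lamCritPoly_eq_zero (hw k) (hcrit k)
  rwa [card_univ, Fintype.card_fin, coeff_lamCritPoly] at this

theorem isRoot_lamNumer {t : ℂ} (ht : t ≠ w) : (lamNumer n v u w (lam n v u w t)).IsRoot t := by
  have : t - w ≠ 0 := sub_ne_zero.mpr ht
  simp only [IsRoot, lamNumer, lam_eq, eval_add, eval_mul, eval_sub, eval_C, eval_X]
  field_simp
  ring

theorem isRoot_derivative_lamNumer {t : ℂ} (ht : t ≠ w) (hcrit : deriv (lam n v u w) t = 0) :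
    (derivative (lamNumer n v u w (lam n v u w t))).IsRoot t := by
  have : t - w ≠ 0 := sub_ne_zero.mpr ht
  have hQ := eval_lamCritPoly_eq_zero ht hcrit
  simp only [lamCritPoly, eval_sub, eval_mul, eval_pow, eval_X, eval_C] at hQ
  simp only [IsRoot, lamNumer, lam_eq, derivative_add, derivative_mul, derivative_sub,
    derivative_C, derivative_X, eval_add, eval_mul, eval_sub, eval_C, eval_X, eval_one, eval_zero]
  field_simp
  linear_combination hQ

theorem natDegree_lamNumer (c : ℂ) : (lamNumer n v u w c).natDegree ≤ n + 2 :=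
  (natDegree_add_le_of_degree_le (natDegree_mul_le_of_le
    (natDegree_sub_le_of_le natDegree_lamPoly.le (natDegree_C c).le) (natDegree_X_sub_C_le w))
    (by simp)).trans (by simp)

theorem natDegree_le_of_lamNumer_eq {c t : ℂ} {B : ℂ[X]}
    (hB : lamNumer n v u w c = (X - C t) ^ 2 * B) : B.natDegree ≤ n := by
  rcases eq_or_ne B 0 with rfl | hB0
  · simp
  have := natDegree_lamNumer (n := n) (v := v) (u := u) (w := w) c
  rw [hB, ((monic_X_sub_C t).pow 2).natDegree_mul' hB0, natDegree_pow, natDegree_X_sub_C] at this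
  omega

theorem lam_sub_div_deriv_mul_eq {t c : ℂ} {B : ℂ[X]}
    (hB : lamNumer n v u w c = (X - C t) ^ 2 * B) {z : ℂ} (hzw : z ≠ w) (hzt : z ≠ t) :
    (lam n v u w z - c) / (deriv (lam n v u w) z * (z - t) ^ 2 * (z - w) ^ 4) =
      B.eval z / ((lamCritPoly n v u w).eval z * (z - w) ^ 3) := by
  have : z - w ≠ 0 := sub_ne_zero.mpr hzw
  have : z - t ≠ 0 := sub_ne_zero.mpr hzt
  rw [lam_sub_eq c hzw, deriv_lam hzw, hB]
  simp only [eval_mul, eval_pow, eval_sub, eval_X, eval_C]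
  field_simp

end Lam

theorem residue_theorem_h3_general
    (n : ℕ) (v : ℕ → ℂ) (u w : ℂ)
    (r : Fin (n + 2) → ℂ) (hinj : Function.Injective r)
    (hw : ∀ k, r k ≠ w)
    (hcrit : ∀ k, deriv (lam n v u w) (r k) = 0)
    (i : Fin (n + 2)) :
    (∑ k : Fin (n + 2),
        residueOrd 1 (fun z => (lam n v u w z - lam n v u w (r i)) /
          (deriv (lam n v u w) z * (z - r i) ^ 2 * (z - w) ^ 4)) (r k))
      + residueOrd 3 (fun z => (lam n v u w z - lam n v u w (r i)) /
          (deriv (lam n v u w) z * (z - r i) ^ 2 * (z - w) ^ 4)) w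
      = 0 := by
  obtain ⟨B, hB⟩ := sq_X_sub_C_dvd_of_isRoot_derivative (isRoot_lamNumer (hw i))
    (isRoot_derivative_lamNumer (hw i) (hcrit i))
  refine sum_residueOrd_div_nodal_mul_pow_eq_zero hinj hw three_pos
    (B := C ((n : ℂ) + 1)⁻¹ * B) ?_ fun z hzr hzw => ?_
  · have := (natDegree_C_mul_le ((n : ℂ) + 1)⁻¹ B).trans (natDegree_le_of_lamNumer_eq hB)
    simp only [Fintype.card_fin]
    omega
  · rw [lam_sub_div_deriv_mul_eq hB hzw (hzr i), lamCritPoly_eq_C_mul_nodal hinj hw hcrit]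
    have : (n : ℂ) + 1 ≠ 0 := Nat.cast_add_one_ne_zero n
    simp only [eval_mul, eval_C]
    field_simp

/-- the sum over all poles of the residues of
`h₃(z) = (λ(z)-λ(r_i))/(λ'(z)(z-r_i)²(z-w)⁴)` is zero (since `h₃ = O(z⁻²)` as
`z → ∞`); the poles are the critical points `r_k` (simple poles, including
`z = r_i`) and `z = w` (a pole of order 3). -/
theorem residue_theorem_h3
    (n : ℕ) (v : ℕ → ℂ) (u w : ℂ) (hu : u ≠ 0)
    (r : Fin (n + 2) → ℂ) (hinj : Function.Injective r)
    (hw : ∀ k, r k ≠ w)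
    (hcrit : ∀ k, deriv (lam n v u w) (r k) = 0)
    (i : Fin (n + 2)) :
    (∑ k : Fin (n + 2),
        residueOrd 1 (fun z => (lam n v u w z - lam n v u w (r i)) /
          (deriv (lam n v u w) z * (z - r i) ^ 2 * (z - w) ^ 4)) (r k))
      + residueOrd 3 (fun z => (lam n v u w z - lam n v u w (r i)) /
          (deriv (lam n v u w) z * (z - r i) ^ 2 * (z - w) ^ 4)) w
      = 0 :=
  residue_theorem_h3_general n v u w r hinj hw hcrit i
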